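/- Let H be a Hilbert space, S ⊆ H a closed subspace, L : S → K a bounded linear operator into a Hilbert space K with ‖L‖ ≤ 1, and E : S → ℝ a convex functional satisfying the norm identity ‖F‖² = ‖LF‖²_K + E(F) for all F ∈ S (so E ≥ 0). Suppose L is compact and that β := inf{E(F) : F ∈ S, ‖LF‖_K = 1} is finite, and that the derivative estimate |⟨∇E(F), G⟩| ≤ 2‖F‖·‖G‖ holds (E has a bounded Gâteaux derivative with E(G) ≥ E(F) + ⟨∇E(F), G − F⟩). Then the infimum is attained: there exists F ∈ S with ‖LF‖_K = 1 and E(F) = β. -/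

import Mathlib

set_option maxHeartbeats 1000000

/-- A nonzero compact operator between real inner product spaces (domain complete)
attains its norm on the unit sphere. -/
lemma compact_norm_attained {X Y : Type*}
    [NormedAddCommGroup X] [InnerProductSpace ℝ X] [CompleteSpace X]
    [NormedAddCommGroup Y] [InnerProductSpace ℝ Y]
    (L : X →L[ℝ] Y) (hL : IsCompactOperator L) (hpos : 0 < ‖L‖) :
    ∃ x : X, ‖x‖ = 1 ∧ ‖L x‖ = ‖L‖ := by
  set M := ‖L‖ with hM
  obtain ⟨z, hz⟩ : ∃ z : X, L z ≠ 0 := by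
    by_contra h
    push_neg at h
    have : ‖L‖ ≤ 0 := L.opNorm_le_bound le_rfl (fun x => by simp [h x])
    linarith
  have hzne : z ≠ 0 := fun h => hz (by simp [h])
  have hseq : ∀ n : ℕ, ∃ x : X, ‖x‖ = 1 ∧ M - 1/(n+1) < ‖L x‖ := by
    intro n
    by_cases hc : M - 1/(n+1) < 0
    · refine ⟨‖z‖⁻¹ • z, ?_, lt_of_lt_of_le hc (norm_nonneg _)⟩
      rw [norm_smul, norm_inv, norm_norm, inv_mul_cancel₀ (norm_ne_zero_iff.mpr hzne)]
    · push_neg at hc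
      by_contra h
      push_neg at h
      have := ContinuousLinearMap.opNorm_le_of_unit_norm hc h
      have hn : (0:ℝ) < 1/(n+1) := by positivity
      linarith
  choose u hu1 hu2 using hseq
  have huM : ∀ n, ‖L (u n)‖ ≤ M := fun n => by
    calc ‖L (u n)‖ ≤ ‖L‖ * ‖u n‖ := L.le_opNorm _
    _ = M := by rw [hu1]; ring
  have htend : Filter.Tendsto (fun n => ‖L (u n)‖) Filter.atTop (nhds M) := by
    have h1 : Filter.Tendsto (fun n : ℕ => M - 1/(n+1)) Filter.atTop (nhds M) := by
      have : Filter.Tendsto (fun n : ℕ => 1 / ((n : ℝ) + 1)) Filter.atTop (nhds 0) :=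
        tendsto_one_div_add_atTop_nhds_zero_nat
      simpa using Filter.Tendsto.sub (tendsto_const_nhds (x := M)) this
    exact tendsto_of_tendsto_of_tendsto_of_le_of_le h1 tendsto_const_nhds
      (fun n => le_of_lt (hu2 n)) huM
  obtain ⟨Kc, hKc, hsub⟩ : ∃ Kc : Set Y, IsCompact Kc ∧ ⇑L '' Metric.closedBall 0 1 ⊆ Kc :=
    IsCompactOperator.image_closedBall_subset_compact (f := (L : X →ₗ[ℝ] Y)) hL 1
  have hmem : ∀ n, L (u n) ∈ Kc := fun n =>
    hsub ⟨u n, by simp [Metric.mem_closedBall, hu1], rfl⟩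
  obtain ⟨y, -, φ, hφ, hconv⟩ := hKc.tendsto_subseq hmem
  have hcauchy : CauchySeq (fun n => u (φ n)) := by
    rw [Metric.cauchySeq_iff]
    intro ε hε
    set δ : ℝ := min (M/4) (ε^2 * M / 32) with hδdef
    have hδpos : 0 < δ := lt_min (by linarith) (by positivity)
    have hδM : δ ≤ M/4 := min_le_left _ _
    have hδε : δ ≤ ε^2 * M / 32 := min_le_right _ _
    obtain ⟨N₁, hN₁⟩ := Metric.tendsto_atTop.mp hconv (δ/2) (by linarith)
    obtain ⟨N₂, hN₂⟩ := Metric.tendsto_atTop.mp (htend.comp hφ.tendsto_atTop) (δ/2) (by linarith)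
    refine ⟨max N₁ N₂, fun n hn m hm => ?_⟩
    have hn1 := hN₁ n (le_trans (le_max_left _ _) hn)
    have hm1 := hN₁ m (le_trans (le_max_left _ _) hm)
    have hn2' := hN₂ n (le_trans (le_max_right _ _) hn)
    have hm2' := hN₂ m (le_trans (le_max_right _ _) hm)
    simp only [Function.comp, Real.dist_eq] at hn2' hm2'
    have hn2 : M - δ/2 < ‖L (u (φ n))‖ := by
      have := abs_lt.mp hn2'; linarith [this.1]
    have hm2 : M - δ/2 < ‖L (u (φ m))‖ := by
      have := abs_lt.mp hm2'; linarith [this.1]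
    set a := u (φ n) with ha'
    set b := u (φ m) with hb'
    have hab : ‖L a - L b‖ < δ := by
      calc ‖L a - L b‖ = dist (L a) (L b) := (dist_eq_norm _ _).symm
      _ ≤ dist (L a) y + dist (L b) y := dist_triangle_right _ _ _
      _ < δ/2 + δ/2 := add_lt_add hn1 hm1
      _ = δ := by ring
    have htri : 2 * ‖L a‖ ≤ ‖L a + L b‖ + ‖L a - L b‖ := by
      have he : L a + L a = (L a + L b) + (L a - L b) := by abel
      calc 2 * ‖L a‖ = ‖L a + L a‖ := by
            rw [← two_smul ℝ (L a), norm_smul]; simp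
      _ = ‖(L a + L b) + (L a - L b)‖ := by rw [he]
      _ ≤ _ := norm_add_le _ _
    have hsum : 2*M - 2*δ ≤ ‖L a + L b‖ := by linarith
    have hop : ‖L a + L b‖ ≤ M * ‖a + b‖ := by
      have := L.le_opNorm (a + b)
      rwa [map_add] at this
    have hpar := parallelogram_law_with_norm ℝ a b
    have ha : ‖a‖ = 1 := hu1 _
    have hb : ‖b‖ = 1 := hu1 _
    have h4 : (2*M - 2*δ)^2 ≤ (M * ‖a+b‖)^2 :=
      pow_le_pow_left₀ (by linarith) (hsum.trans hop) 2
    rw [mul_pow] at h4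
    have h5 : ‖a+b‖^2 + ‖a-b‖^2 = 4 := by
      rw [ha, hb] at hpar; rw [sq, sq]; linarith
    have h6 : M^2 * (‖a+b‖^2 + ‖a-b‖^2) = M^2 * 4 := by rw [h5]
    have h7 : M^2 * ‖a-b‖^2 ≤ 16 * δ * M := by
      nlinarith [h4, h6, sq_nonneg δ, mul_pos hpos hδpos]
    have h8 : ‖a-b‖^2 ≤ ε^2/2 := by
      nlinarith [h7, hδε, mul_pos hpos hpos, hpos]
    have h9 : ‖a-b‖^2 < ε^2 := by nlinarith [sq_nonneg ε, hε]
    rw [dist_eq_norm]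
    exact lt_of_pow_lt_pow_left₀ 2 hε.le h9
  obtain ⟨x, hx⟩ := cauchySeq_tendsto_of_complete hcauchy
  have hxnorm : ‖x‖ = 1 := by
    have h1 : Filter.Tendsto (fun n => ‖u (φ n)‖) Filter.atTop (nhds ‖x‖) :=
      (continuous_norm.tendsto x).comp hx
    have h2 : Filter.Tendsto (fun n => ‖u (φ n)‖) Filter.atTop (nhds 1) := by
      simpa [hu1] using (tendsto_const_nhds : Filter.Tendsto (fun _ : ℕ => (1:ℝ)) _ _)
    exact tendsto_nhds_unique h1 h2
  refine ⟨x, hxnorm, ?_⟩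
  have h1 : Filter.Tendsto (fun n => ‖L (u (φ n))‖) Filter.atTop (nhds ‖L x‖) :=
    (continuous_norm.tendsto _).comp ((L.continuous.tendsto x).comp hx)
  have h2 : Filter.Tendsto (fun n => ‖L (u (φ n))‖) Filter.atTop (nhds M) :=
    htend.comp hφ.tendsto_atTop
  exact tendsto_nhds_unique h1 h2

/-- Abstract existence of a minimizer (Lemma 1): on a closed subspace `S` of a Hilbert
space, with a compact operator `L` of norm `≤ 1` and a convex energy `E` with
`‖F‖² = ‖LF‖² + E(F)` and bounded Gâteaux derivative, the infimum of `E` over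
`{‖LF‖ = 1}` is attained. -/
theorem minimizer_exists
    {H K : Type*}
    [NormedAddCommGroup H] [InnerProductSpace ℝ H] [CompleteSpace H]
    [NormedAddCommGroup K] [InnerProductSpace ℝ K] [CompleteSpace K]
    (S : Submodule ℝ H) (hS : IsClosed (S : Set H))
    (L : ↥S →L[ℝ] K) (hLnorm : ‖L‖ ≤ 1)
    (hLcompact : IsCompactOperator L)
    (E : ↥S → ℝ)
    (hnorm : ∀ F : ↥S, ‖F‖ ^ 2 = ‖L F‖ ^ 2 + E F)
    (D : ↥S → (↥S →L[ℝ] ℝ))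
    (hconv : ∀ F G : ↥S, E F + D F (G - F) ≤ E G)
    (hbdd : ∀ F G : ↥S, |D F G| ≤ 2 * ‖F‖ * ‖G‖)
    (hne : ∃ F : ↥S, ‖L F‖ = 1) :
    ∃ F : ↥S, ‖L F‖ = 1 ∧ E F = sInf {e : ℝ | ∃ G : ↥S, ‖L G‖ = 1 ∧ E G = e} := by
  haveI : CompleteSpace ↥S := hS.completeSpace_coe
  have hE : ∀ F : ↥S, E F = ‖F‖^2 - ‖L F‖^2 := fun F => by linarith [hnorm F]
  obtain ⟨G₀, hG₀⟩ := hne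
  have hMpos : 0 < ‖L‖ := by
    rcases lt_or_ge 0 ‖L‖ with h | h
    · exact h
    · exfalso
      have h0 : ‖L‖ = 0 := le_antisymm h (ContinuousLinearMap.opNorm_nonneg L)
      have h1 := L.le_opNorm G₀
      rw [h0, hG₀] at h1
      simp at h1
      linarith
  obtain ⟨x, hx1, hx2⟩ := compact_norm_attained L hLcompact hMpos
  set M := ‖L‖ with hMdef
  set F : ↥S := M⁻¹ • x with hF
  have hLF : ‖L F‖ = 1 := by
    rw [hF, map_smul, norm_smul, hx2, Real.norm_eq_abs,
      abs_of_pos (inv_pos.mpr hMpos), inv_mul_cancel₀ hMpos.ne']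
  have hFnorm : ‖F‖ = M⁻¹ := by
    rw [hF, norm_smul, hx1, Real.norm_eq_abs, abs_of_pos (inv_pos.mpr hMpos), mul_one]
  have hEF : E F = M⁻¹^2 - 1 := by rw [hE, hLF, hFnorm]; ring
  have hlb : ∀ G : ↥S, ‖L G‖ = 1 → E F ≤ E G := by
    intro G hG
    have h1 : 1 ≤ M * ‖G‖ := by
      have := L.le_opNorm G; rw [hG] at this; exact this
    have h2 : M⁻¹ ≤ ‖G‖ := by
      rw [inv_eq_one_div, div_le_iff₀ hMpos]
      linarith [mul_comm M ‖G‖]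
    have h3 : M⁻¹^2 ≤ ‖G‖^2 := by
      have h0 : (0:ℝ) ≤ M⁻¹ := (inv_pos.mpr hMpos).le
      nlinarith
    rw [hE G, hG, hEF]
    linarith
  refine ⟨F, hLF, ?_⟩
  have hmem : E F ∈ {e : ℝ | ∃ G : ↥S, ‖L G‖ = 1 ∧ E G = e} := ⟨F, hLF, rfl⟩
  refine le_antisymm ?_ ?_
  · exact le_csInf ⟨E F, hmem⟩ (fun e ⟨G, hG1, hG2⟩ => hG2 ▸ hlb G hG1)
  · exact csInf_le ⟨E F, fun e ⟨G, hG1, hG2⟩ => hG2 ▸ hlb G hG1⟩ hmem
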